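/- Let 𝐇 be an entropy. Then 𝐇(u^{(2)}) > 0, where u^{(2)} := I_2/2 is the uniform state of dimension 2. -/

import Mathlib

open Matrix Kronecker BigOperators
open scoped ENNReal ComplexOrder

noncomputable section

/-- A quantum state: a positive semidefinite matrix of trace one. -/
def IsState {α : Type} [Fintype α] (ρ : Matrix α α ℂ) : Prop :=
  ρ.PosSemidef ∧ ρ.trace = 1

/-- The Choi matrix `∑ i j, E i j ⊗ N (E i j)` of a map between matrix algebras. -/
def choiMatrix {α β : Type} [Fintype α] [DecidableEq α] [Fintype β]
    (N : Matrix α α ℂ → Matrix β β ℂ) : Matrix (α × β) (α × β) ℂ :=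
  ∑ i : α, ∑ j : α, Matrix.single i j (1 : ℂ) ⊗ₖ N (Matrix.single i j 1)

/-- A quantum channel: a linear, trace-preserving and completely positive map. -/
def IsChannel {α β : Type} [Fintype α] [DecidableEq α] [Fintype β]
    (N : Matrix α α ℂ → Matrix β β ℂ) : Prop :=
  IsLinearMap ℂ N ∧ (∀ X, (N X).trace = X.trace) ∧ (choiMatrix N).PosSemidef

/-- Partial trace over the first tensor factor. -/
def trA {α β : Type} [Fintype α] (ρ : Matrix (α × β) (α × β) ℂ) : Matrix β β ℂ :=
  Matrix.of fun j j' => ∑ i : α, ρ (i, j) (i, j')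

/-- The uniform (maximally mixed) state of dimension `n`. -/
def unif (n : ℕ) : Matrix (Fin n) (Fin n) ℂ := (n : ℂ)⁻¹ • 1

/-- The tensor extension `M ⊗ id` of a map `M` acting on the first factor. -/
def tensorIdRight {a a' : ℕ} (b : ℕ)
    (M : Matrix (Fin a) (Fin a) ℂ → Matrix (Fin a') (Fin a') ℂ)
    (X : Matrix (Fin a × Fin b) (Fin a × Fin b) ℂ) :
    Matrix (Fin a' × Fin b) (Fin a' × Fin b) ℂ :=
  Matrix.of fun p q => M (Matrix.of fun k k' => X (k, p.2) (k', q.2)) p.1 q.1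

/-- A conditionally unital bipartite channel: it sends every state of the form
`u_A ⊗ ρ_B` to a state of the form `u_C ⊗ σ_{B'}`. -/
def CondUnital {a b c b' : ℕ}
    (N : Matrix (Fin a × Fin b) (Fin a × Fin b) ℂ → Matrix (Fin c × Fin b') (Fin c × Fin b') ℂ) :
    Prop :=
  ∀ ρB : Matrix (Fin b) (Fin b) ℂ, IsState ρB →
    ∃ σ : Matrix (Fin b') (Fin b') ℂ, IsState σ ∧ N (unif a ⊗ₖ ρB) = unif c ⊗ₖ σ

/-- An `A ↛ B'` semi-causal bipartite channel. -/
def SemiCausal {a b c b' : ℕ}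
    (N : Matrix (Fin a × Fin b) (Fin a × Fin b) ℂ → Matrix (Fin c × Fin b') (Fin c × Fin b') ℂ) :
    Prop :=
  ∀ M : Matrix (Fin a) (Fin a) ℂ → Matrix (Fin a) (Fin a) ℂ, IsChannel M →
    ∀ X : Matrix (Fin a × Fin b) (Fin a × Fin b) ℂ,
      trA (N (tensorIdRight b M X)) = trA (N X)

/-- A locally balanced channel: a quantum channel that is both conditionally unital
and `A ↛ B'` semi-causal. -/
def LocallyBalanced {a b c b' : ℕ}
    (N : Matrix (Fin a × Fin b) (Fin a × Fin b) ℂ → Matrix (Fin c × Fin b') (Fin c × Fin b') ℂ) :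
    Prop :=
  IsChannel N ∧ CondUnital N ∧ SemiCausal N

/-- Conditional majorization `ρ ≻_A σ` with respect to the first system. -/
def CondMaj {a b a' b' : ℕ}
    (ρ : Matrix (Fin a × Fin b) (Fin a × Fin b) ℂ)
    (σ : Matrix (Fin a' × Fin b') (Fin a' × Fin b') ℂ) : Prop :=
  (a' ≥ a ∧ ∃ (V : Matrix (Fin a') (Fin a) ℂ)
      (N : Matrix (Fin a × Fin b) (Fin a × Fin b) ℂ →
           Matrix (Fin a × Fin b') (Fin a × Fin b') ℂ),
      Vᴴ * V = 1 ∧ LocallyBalanced N ∧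
      σ = (V ⊗ₖ (1 : Matrix (Fin b') (Fin b') ℂ)) * N ρ *
            (V ⊗ₖ (1 : Matrix (Fin b') (Fin b') ℂ))ᴴ) ∨
  (a ≥ a' ∧ ∃ (U : Matrix (Fin a) (Fin a') ℂ)
      (N : Matrix (Fin a × Fin b) (Fin a × Fin b) ℂ →
           Matrix (Fin a × Fin b') (Fin a × Fin b') ℂ),
      Uᴴ * U = 1 ∧ LocallyBalanced N ∧
      (U ⊗ₖ (1 : Matrix (Fin b') (Fin b') ℂ)) * σ *
          (U ⊗ₖ (1 : Matrix (Fin b') (Fin b') ℂ))ᴴ = N ρ)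

/-- Relaxed conditional majorization `ρ ≻^A σ`: as `CondMaj`, with the locally
balanced channel replaced by a mere conditionally unital channel. -/
def RelCondMaj {a b a' b' : ℕ}
    (ρ : Matrix (Fin a × Fin b) (Fin a × Fin b) ℂ)
    (σ : Matrix (Fin a' × Fin b') (Fin a' × Fin b') ℂ) : Prop :=
  (a' ≥ a ∧ ∃ (V : Matrix (Fin a') (Fin a) ℂ)
      (N : Matrix (Fin a × Fin b) (Fin a × Fin b) ℂ →
           Matrix (Fin a × Fin b') (Fin a × Fin b') ℂ),
      Vᴴ * V = 1 ∧ (IsChannel N ∧ CondUnital N) ∧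
      σ = (V ⊗ₖ (1 : Matrix (Fin b') (Fin b') ℂ)) * N ρ *
            (V ⊗ₖ (1 : Matrix (Fin b') (Fin b') ℂ))ᴴ) ∨
  (a ≥ a' ∧ ∃ (U : Matrix (Fin a) (Fin a') ℂ)
      (N : Matrix (Fin a × Fin b) (Fin a × Fin b) ℂ →
           Matrix (Fin a × Fin b') (Fin a × Fin b') ℂ),
      Uᴴ * U = 1 ∧ (IsChannel N ∧ CondUnital N) ∧
      (U ⊗ₖ (1 : Matrix (Fin b') (Fin b') ℂ)) * σ *
          (U ⊗ₖ (1 : Matrix (Fin b') (Fin b') ℂ))ᴴ = N ρ)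

/-- Reordering `(A × B) × (A' × B') ≃ AA' × BB'`. -/
def sysEquiv (a b a' b' : ℕ) :
    (Fin a × Fin b) × (Fin a' × Fin b') ≃ Fin (a * a') × Fin (b * b') :=
  (Equiv.prodProdProdComm (Fin a) (Fin b) (Fin a') (Fin b')).trans
    (finProdFinEquiv.prodCongr finProdFinEquiv)

/-- The tensor product `ρ_{AB} ⊗ σ_{A'B'}` regarded as a bipartite state with
first system `AA'` and second system `BB'`. -/
def tensorState {a b a' b' : ℕ}
    (ρ : Matrix (Fin a × Fin b) (Fin a × Fin b) ℂ)
    (σ : Matrix (Fin a' × Fin b') (Fin a' × Fin b') ℂ) :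
    Matrix (Fin (a * a') × Fin (b * b')) (Fin (a * a') × Fin (b * b')) ℂ :=
  Matrix.reindex (sysEquiv a b a' b') (sysEquiv a b a' b') (ρ ⊗ₖ σ)

/-- Reindexing of a matrix on a product of `Fin` types as a matrix on a single `Fin` type. -/
def mreindex {a b : ℕ} (ρ : Matrix (Fin a × Fin b) (Fin a × Fin b) ℂ) :
    Matrix (Fin (a * b)) (Fin (a * b)) ℂ :=
  Matrix.reindex finProdFinEquiv finProdFinEquiv ρ

/-- Majorization `ρ ≻ σ` between states of possibly different dimensions. -/
def Maj {n n' : ℕ} (ρ : Matrix (Fin n) (Fin n) ℂ) (σ : Matrix (Fin n') (Fin n') ℂ) : Prop :=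
  (n' ≥ n ∧ ∃ (V : Matrix (Fin n') (Fin n) ℂ)
      (N : Matrix (Fin n) (Fin n) ℂ → Matrix (Fin n) (Fin n) ℂ),
      Vᴴ * V = 1 ∧ IsChannel N ∧ N 1 = 1 ∧ σ = V * N ρ * Vᴴ) ∨
  (n ≥ n' ∧ ∃ (U : Matrix (Fin n) (Fin n') ℂ)
      (N : Matrix (Fin n) (Fin n) ℂ → Matrix (Fin n) (Fin n) ℂ),
      Uᴴ * U = 1 ∧ IsChannel N ∧ N 1 = 1 ∧ U * σ * Uᴴ = N ρ)

/-- The conditional min-entropy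
`H_min(A|B)_ρ = - log₂ min {λ ≥ 0 : λ I_A ⊗ ρ_B - ρ_{AB} ≽ 0}`. -/
def condMinEntropy {a b : ℕ} (ρ : Matrix (Fin a × Fin b) (Fin a × Fin b) ℂ) : ℝ :=
  - Real.logb 2 (sInf {l : ℝ | 0 ≤ l ∧
      (l • ((1 : Matrix (Fin a) (Fin a) ℂ) ⊗ₖ trA ρ) - ρ).PosSemidef})

/-- The conditional min-entropy `H_min^↑(A|B)_ρ`, optimized over states `σ_B`. -/
def condMinEntropyUp {a b : ℕ} (ρ : Matrix (Fin a × Fin b) (Fin a × Fin b) ℂ) : ℝ :=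
  sSup {r : ℝ | ∃ σ : Matrix (Fin b) (Fin b) ℂ, IsState σ ∧
    (∃ l : ℝ, 0 ≤ l ∧ (l • ((1 : Matrix (Fin a) (Fin a) ℂ) ⊗ₖ σ) - ρ).PosSemidef) ∧
    r = - Real.logb 2 (sInf {l : ℝ | 0 ≤ l ∧
      (l • ((1 : Matrix (Fin a) (Fin a) ℂ) ⊗ₖ σ) - ρ).PosSemidef})}

/-- The maximally entangled state of rank `k` on `ℂ^k ⊗ ℂ^k`. -/
def maxEnt (k : ℕ) : Matrix (Fin k × Fin k) (Fin k × Fin k) ℂ :=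
  Matrix.of fun p q => if p.1 = p.2 ∧ q.1 = q.2 then (k : ℂ)⁻¹ else 0

/-- The quantum channel on `m × m` matrices induced by a doubly stochastic matrix `D`,
`ρ ↦ ∑ x x', D x' x * ρ x x • E x' x'`. -/
def dsChannel {m : ℕ} (D : Matrix (Fin m) (Fin m) ℝ) :
    Matrix (Fin m) (Fin m) ℂ → Matrix (Fin m) (Fin m) ℂ :=
  fun ρ => ∑ x : Fin m, ∑ x' : Fin m,
    (((D x' x : ℝ) : ℂ) * ρ x x) • Matrix.single x' x' (1 : ℂ)

/-- A doubly stochastic matrix: nonnegative entries, all row and column sums equal one. -/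
def IsDoublyStochastic {m : ℕ} (D : Matrix (Fin m) (Fin m) ℝ) : Prop :=
  (∀ x x', 0 ≤ D x x') ∧ (∀ x, ∑ x', D x x' = 1) ∧ (∀ x', ∑ x, D x x' = 1)

/-- The tensor product `M ⊗ F` of two (linear) maps between matrix algebras. -/
def tensorMap {m m' n n' : ℕ}
    (M : Matrix (Fin m) (Fin m) ℂ → Matrix (Fin m') (Fin m') ℂ)
    (F : Matrix (Fin n) (Fin n) ℂ → Matrix (Fin n') (Fin n') ℂ) :
    Matrix (Fin m × Fin n) (Fin m × Fin n) ℂ →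
      Matrix (Fin m' × Fin n') (Fin m' × Fin n') ℂ :=
  fun X => ∑ k : Fin m, ∑ k' : Fin m, ∑ l : Fin n, ∑ l' : Fin n,
    X (k, l) (k', l') •
      (M (Matrix.single k k' 1) ⊗ₖ F (Matrix.single l l' 1))

/-- A conditional entropy: a real-valued function on all bipartite states of all finite
dimensions that is not identically zero, reverses conditional majorization, and is
additive on tensor products. -/
structure CondEntropy where
  H : ∀ (a b : ℕ), Matrix (Fin a × Fin b) (Fin a × Fin b) ℂ → ℝ
  nontrivial : ∃ (a b : ℕ) (ρ : Matrix (Fin a × Fin b) (Fin a × Fin b) ℂ),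
    IsState ρ ∧ H a b ρ ≠ 0
  mono : ∀ (a b a' b' : ℕ) (ρ : Matrix (Fin a × Fin b) (Fin a × Fin b) ℂ)
    (σ : Matrix (Fin a' × Fin b') (Fin a' × Fin b') ℂ),
    IsState ρ → IsState σ → CondMaj ρ σ → H a b ρ ≤ H a' b' σ
  additive : ∀ (a b a' b' : ℕ) (ρ : Matrix (Fin a × Fin b) (Fin a × Fin b) ℂ)
    (σ : Matrix (Fin a' × Fin b') (Fin a' × Fin b') ℂ),
    IsState ρ → IsState σ →
    H (a * a') (b * b') (tensorState ρ σ) = H a b ρ + H a' b' σ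

/-- A conditional entropy is normalized if `H(A|B) = 1` on `u⁽²⁾ ⊗ ρ_B`. -/
def CondEntropy.Normalized (E : CondEntropy) : Prop :=
  ∀ (b : ℕ) (ρB : Matrix (Fin b) (Fin b) ℂ), IsState ρB →
    E.H 2 b (unif 2 ⊗ₖ ρB) = 1

/-- A relaxed conditional entropy: as `CondEntropy`, but monotone under the relaxed
conditional majorization. -/
structure RelCondEntropy where
  H : ∀ (a b : ℕ), Matrix (Fin a × Fin b) (Fin a × Fin b) ℂ → ℝ
  nontrivial : ∃ (a b : ℕ) (ρ : Matrix (Fin a × Fin b) (Fin a × Fin b) ℂ),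
    IsState ρ ∧ H a b ρ ≠ 0
  mono : ∀ (a b a' b' : ℕ) (ρ : Matrix (Fin a × Fin b) (Fin a × Fin b) ℂ)
    (σ : Matrix (Fin a' × Fin b') (Fin a' × Fin b') ℂ),
    IsState ρ → IsState σ → RelCondMaj ρ σ → H a b ρ ≤ H a' b' σ
  additive : ∀ (a b a' b' : ℕ) (ρ : Matrix (Fin a × Fin b) (Fin a × Fin b) ℂ)
    (σ : Matrix (Fin a' × Fin b') (Fin a' × Fin b') ℂ),
    IsState ρ → IsState σ →
    H (a * a') (b * b') (tensorState ρ σ) = H a b ρ + H a' b' σ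

/-- A relaxed conditional entropy is normalized if `H(A|B) = 1` on `u⁽²⁾ ⊗ ρ_B`. -/
def RelCondEntropy.Normalized (E : RelCondEntropy) : Prop :=
  ∀ (b : ℕ) (ρB : Matrix (Fin b) (Fin b) ℂ), IsState ρB →
    E.H 2 b (unif 2 ⊗ₖ ρB) = 1

/-- An entropy: a real-valued function on all states of all finite dimensions that is
not identically zero, reverses majorization, and is additive on tensor products. -/
structure Entropy where
  H : ∀ (n : ℕ), Matrix (Fin n) (Fin n) ℂ → ℝ
  nontrivial : ∃ (n : ℕ) (ρ : Matrix (Fin n) (Fin n) ℂ), IsState ρ ∧ H n ρ ≠ 0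
  mono : ∀ (n n' : ℕ) (ρ : Matrix (Fin n) (Fin n) ℂ) (σ : Matrix (Fin n') (Fin n') ℂ),
    IsState ρ → IsState σ → Maj ρ σ → H n ρ ≤ H n' σ
  additive : ∀ (n n' : ℕ) (ρ : Matrix (Fin n) (Fin n) ℂ) (σ : Matrix (Fin n') (Fin n') ℂ),
    IsState ρ → IsState σ → H (n * n') (mreindex (ρ ⊗ₖ σ)) = H n ρ + H n' σ

/-- A relative entropy: an `[0,∞]`-valued function on pairs of states of equal dimension
that is not identically zero, monotone under quantum channels, and additive on
tensor products. -/
structure RelEntropy where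
  D : ∀ (n : ℕ), Matrix (Fin n) (Fin n) ℂ → Matrix (Fin n) (Fin n) ℂ → ℝ≥0∞
  nontrivial : ∃ (n : ℕ) (ρ σ : Matrix (Fin n) (Fin n) ℂ),
    IsState ρ ∧ IsState σ ∧ D n ρ σ ≠ 0
  mono : ∀ (n m : ℕ) (N : Matrix (Fin n) (Fin n) ℂ → Matrix (Fin m) (Fin m) ℂ),
    IsChannel N → ∀ ρ σ : Matrix (Fin n) (Fin n) ℂ,
      IsState ρ → IsState σ → D m (N ρ) (N σ) ≤ D n ρ σ
  additive : ∀ (n m : ℕ) (ρ σ : Matrix (Fin n) (Fin n) ℂ) (ω τ : Matrix (Fin m) (Fin m) ℂ),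
    IsState ρ → IsState σ → IsState ω → IsState τ →
    D (n * m) (mreindex (ρ ⊗ₖ ω)) (mreindex (σ ⊗ₖ τ)) = D n ρ σ + D m ω τ


/-- The conditional entropy `log₂|A| − 𝐃(ρ_{AB} ‖ u_A ⊗ ρ_B)` induced by a relative
entropy `𝐃`, valued in the extended reals. -/
def RelEntropy.condH (Dd : RelEntropy) (a b : ℕ)
    (ρ : Matrix (Fin a × Fin b) (Fin a × Fin b) ℂ) : EReal :=
  ((Real.logb 2 a : ℝ) : EReal) -
    ((Dd.D (a * b) (mreindex ρ) (mreindex (unif a ⊗ₖ trA ρ)) : ℝ≥0∞) : EReal)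

/-!
Additivity forces `H(u_1) = 0`, and an isometric embedding majorizes in both directions, so `H`
is invariant under isometries and vanishes on pure states. A pure state majorizes every state of
its dimension (through a unital measure-and-prepare channel) and every state majorizes the
uniform one; with the embedding of `u_n` into dimension `2^n` this gives
`0 ≤ H(ρ) ≤ H(u_n) ≤ H(u_{2^n}) = n H(u_2)` for every state `ρ` of dimension `n`, and
nontriviality provides a `ρ` with `H(ρ) ≠ 0`.
-/

section States

variable {α β : Type} [Fintype α] [Fintype β]

lemma IsState.dim_ne_zero {n : ℕ} {ρ : Matrix (Fin n) (Fin n) ℂ} (hρ : IsState ρ) :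
    n ≠ 0 := by
  rintro rfl
  simpa [Matrix.trace] using hρ.2

lemma IsState.eq_single [Unique α] [DecidableEq α] {ρ : Matrix α α ℂ} (hρ : IsState ρ) :
    ρ = Matrix.single default default 1 := by
  ext i j
  simpa [Subsingleton.elim i default, Subsingleton.elim j default, Matrix.trace] using hρ.2

open scoped MatrixOrder in
lemma IsState.one_sub_posSemidef [DecidableEq α] {ρ : Matrix α α ℂ} (hρ : IsState ρ) :
    (1 - ρ).PosSemidef := by
  obtain ⟨hpsd, htr⟩ := hρ
  have hsum : ∑ j, hpsd.1.eigenvalues j = 1 := by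
    apply Complex.ofReal_injective
    simpa [htr] using hpsd.1.trace_eq_sum_eigenvalues.symm
  rw [← Matrix.le_iff]
  simpa using le_algebraMap_of_spectrum_le (R := ℝ) (r := 1) (a := ρ)
    (fun x hx => by
      obtain ⟨i, rfl⟩ := hpsd.1.spectrum_real_eq_range_eigenvalues ▸ hx
      exact hsum ▸ Finset.single_le_sum (fun j _ => hpsd.eigenvalues_nonneg j)
        (Finset.mem_univ i)) hpsd.1

lemma IsState.complement [DecidableEq α] (h2 : 2 ≤ Fintype.card α) {ρ : Matrix α α ℂ}
    (hρ : IsState ρ) :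
    IsState (((Fintype.card α : ℂ) - 1)⁻¹ • (1 - ρ)) := by
  have hc : (1 : ℝ) < Fintype.card α := by exact_mod_cast h2
  have hc' : ((Fintype.card α : ℂ) - 1)⁻¹ = (((Fintype.card α : ℝ) - 1)⁻¹ : ℝ) := by
    push_cast; rfl
  refine ⟨hρ.one_sub_posSemidef.smul ?_, ?_⟩
  · rw [hc']
    exact Complex.zero_le_real.mpr (inv_nonneg.mpr (sub_nonneg.mpr hc.le))
  · have hne : (Fintype.card α : ℂ) - 1 ≠ 0 := by
      rw [sub_ne_zero]; exact_mod_cast hc.ne'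
    rw [Matrix.trace_smul, Matrix.trace_sub, Matrix.trace_one, hρ.2, smul_eq_mul,
      inv_mul_cancel₀ hne]

lemma isState_single [DecidableEq α] (a : α) : IsState (Matrix.single a a (1 : ℂ)) := by
  refine ⟨?_, trace_single_eq_same a 1⟩
  simpa [Matrix.single_mul_single_same, Matrix.conjTranspose_single] using
    Matrix.posSemidef_conjTranspose_mul_self (Matrix.single a a (1 : ℂ))

lemma isState_unif {n : ℕ} (hn : n ≠ 0) : IsState (unif n) := by
  refine ⟨Matrix.PosSemidef.one.smul (by positivity), ?_⟩
  rw [unif, Matrix.trace_smul, Matrix.trace_one, Fintype.card_fin, smul_eq_mul,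
    inv_mul_cancel₀ (Nat.cast_ne_zero.mpr hn)]

lemma mreindex_unif_kronecker_unif (a b : ℕ) :
    mreindex (unif a ⊗ₖ unif b) = unif (a * b) := by
  rw [unif, unif, Matrix.smul_kronecker, Matrix.kronecker_smul, Matrix.one_kronecker_one,
    smul_smul, ← mul_inv, ← Nat.cast_mul]
  simp [mreindex, Matrix.reindex_apply, Matrix.submatrix_smul, Matrix.submatrix_one_equiv,
    unif]

lemma IsState.conj_isometry [DecidableEq α] {V : Matrix β α ℂ} (hV : Vᴴ * V = 1)
    {ρ : Matrix α α ℂ} (hρ : IsState ρ) : IsState (V * ρ * Vᴴ) :=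
  ⟨hρ.1.mul_mul_conjTranspose_same V, by rw [Matrix.trace_mul_cycle, hV, one_mul, hρ.2]⟩

lemma card_le_of_isometry [DecidableEq α] {V : Matrix β α ℂ} (hV : Vᴴ * V = 1) :
    Fintype.card α ≤ Fintype.card β := by
  calc Fintype.card α = (Vᴴ * V).rank := by rw [hV, Matrix.rank_one]
    _ ≤ V.rank := Matrix.rank_mul_le_right _ _
    _ ≤ Fintype.card β := Matrix.rank_le_card_height V

end States

lemma conjTranspose_mul_submatrix_one {α β R : Type*} [DecidableEq α] [Fintype β]
    [DecidableEq β] [Semiring R] [StarRing R] {e : α → β} (he : Function.Injective e) :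
    ((1 : Matrix β β R).submatrix id e)ᴴ * (1 : Matrix β β R).submatrix id e = 1 := by
  rw [Matrix.conjTranspose_submatrix, Matrix.conjTranspose_one,
    ← Matrix.submatrix_mul _ _ _ _ _ Function.bijective_id, Matrix.mul_one,
    Matrix.submatrix_one _ he]

section Channels

variable {α β : Type} [Fintype α] [DecidableEq α] [Fintype β]

lemma choiMatrix_add (M N : Matrix α α ℂ → Matrix β β ℂ) :
    choiMatrix (fun X => M X + N X) = choiMatrix M + choiMatrix N := by
  simp only [choiMatrix, Matrix.kronecker_add, Finset.sum_add_distrib]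

lemma choiMatrix_smul_const (f : Matrix α α ℂ → ℂ) (σ : Matrix β β ℂ) :
    choiMatrix (fun X => f X • σ) =
      (∑ i, ∑ j, f (Matrix.single i j 1) • Matrix.single i j 1) ⊗ₖ σ := by
  ext ⟨i, k⟩ ⟨j, l⟩
  simp only [choiMatrix, Matrix.sum_apply, Matrix.kroneckerMap_apply, Matrix.smul_apply,
    smul_eq_mul, Finset.sum_mul]
  exact Finset.sum_congr rfl fun _ _ => Finset.sum_congr rfl fun _ _ => by ring

lemma sum_trace_smul_single :
    ∑ i : α, ∑ j : α, (Matrix.single i j (1 : ℂ)).trace • Matrix.single i j (1 : ℂ) =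
      1 := by
  rw [← Matrix.sum_single_one]
  refine Finset.sum_congr rfl fun i _ => ?_
  rw [Finset.sum_eq_single i
      (fun j _ hji => by rw [Matrix.trace_single_eq_of_ne i j 1 hji.symm, zero_smul])
      (by simp),
    Matrix.trace_single_eq_same, one_smul]

lemma sum_apply_smul_single (a : α) :
    ∑ i : α, ∑ j : α, Matrix.single i j (1 : ℂ) a a • Matrix.single i j (1 : ℂ) =
      Matrix.single a a 1 := by
  simp [Matrix.single_apply, ite_and]

lemma isChannel_id : IsChannel (id : Matrix α α ℂ → Matrix α α ℂ) := by
  refine ⟨⟨fun _ _ => rfl, fun _ _ => rfl⟩, fun _ => rfl, ?_⟩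
  let Ω : Matrix Unit (α × α) ℂ := Matrix.of fun _ p => if p.1 = p.2 then 1 else 0
  have hchoi : choiMatrix (id : Matrix α α ℂ → Matrix α α ℂ) = Ωᴴ * Ω := by
    ext ⟨i, j⟩ ⟨k, l⟩
    simp only [choiMatrix, Matrix.sum_apply, Matrix.kroneckerMap_apply, id_eq,
      Matrix.single, Matrix.of_apply, Matrix.mul_apply, Matrix.conjTranspose_apply, Ω,
      ite_and, Fintype.sum_unique]
    by_cases hij : i = j <;> by_cases hkl : k = l <;> simp [hij, hkl, eq_comm]
  exact hchoi ▸ Matrix.posSemidef_conjTranspose_mul_self Ω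

lemma isChannel_trace_smul [DecidableEq β] {σ : Matrix β β ℂ} (hσ : IsState σ) :
    IsChannel fun X : Matrix α α ℂ => X.trace • σ := by
  refine ⟨⟨fun X Y => by rw [Matrix.trace_add, add_smul],
      fun c X => by rw [Matrix.trace_smul, smul_assoc]⟩, fun X => ?_, ?_⟩
  · rw [Matrix.trace_smul, hσ.2, smul_eq_mul, mul_one]
  · rw [choiMatrix_smul_const, sum_trace_smul_single]
    exact Matrix.PosSemidef.one.kronecker hσ.1

def measurePrepare (a : α) (ρ τ : Matrix β β ℂ) (X : Matrix α α ℂ) : Matrix β β ℂ :=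
  X a a • ρ + (X.trace - X a a) • τ

lemma isChannel_measurePrepare [DecidableEq β] (a : α) {ρ τ : Matrix β β ℂ}
    (hρ : IsState ρ) (hτ : IsState τ) : IsChannel (measurePrepare a ρ τ) := by
  refine ⟨⟨fun X Y => ?_, fun c X => ?_⟩, fun X => ?_, ?_⟩
  · simp only [measurePrepare, Matrix.add_apply, Matrix.trace_add]
    module
  · simp only [measurePrepare, Matrix.smul_apply, Matrix.trace_smul, smul_eq_mul]
    module
  · simp only [measurePrepare, Matrix.trace_add, Matrix.trace_smul, hρ.2, hτ.2, smul_eq_mul]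
    ring
  · have hsplit : choiMatrix (measurePrepare a ρ τ) =
        Matrix.single a a 1 ⊗ₖ ρ + (1 - Matrix.single a a 1) ⊗ₖ τ := by
      change choiMatrix (fun X => X a a • ρ + (X.trace - X a a) • τ) = _
      rw [choiMatrix_add, choiMatrix_smul_const, choiMatrix_smul_const]
      simp only [sub_smul, Finset.sum_sub_distrib, sum_trace_smul_single,
        sum_apply_smul_single]
    rw [hsplit]
    exact ((isState_single a).1.kronecker hρ.1).add
      ((isState_single a).one_sub_posSemidef.kronecker hτ.1)

end Channels

section Majorization

variable {n n' : ℕ}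

lemma maj_unif {ρ : Matrix (Fin n) (Fin n) ℂ} (hρ : IsState ρ) : Maj ρ (unif n) := by
  have hn : n ≠ 0 := hρ.dim_ne_zero
  refine .inl ⟨le_rfl, 1, fun X => X.trace • unif n, by simp,
    isChannel_trace_smul (isState_unif hn), ?_, by simp [hρ.2]⟩
  simp [unif, smul_smul, mul_inv_cancel₀ (Nat.cast_ne_zero.mpr hn : (n : ℂ) ≠ 0)]

lemma maj_conj_isometry {V : Matrix (Fin n') (Fin n) ℂ} (hV : Vᴴ * V = 1)
    (ρ : Matrix (Fin n) (Fin n) ℂ) : Maj ρ (V * ρ * Vᴴ) :=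
  .inl ⟨by simpa using card_le_of_isometry hV, V, id, hV, isChannel_id, rfl, rfl⟩

lemma conj_isometry_maj {V : Matrix (Fin n') (Fin n) ℂ} (hV : Vᴴ * V = 1)
    (ρ : Matrix (Fin n) (Fin n) ℂ) : Maj (V * ρ * Vᴴ) ρ :=
  .inr ⟨by simpa using card_le_of_isometry hV, V, id, hV, isChannel_id, rfl, rfl⟩

lemma single_maj (h2 : 2 ≤ n) (a : Fin n) {ρ : Matrix (Fin n) (Fin n) ℂ} (hρ : IsState ρ) :
    Maj (Matrix.single a a 1) ρ := by
  -- `τ = (1 - ρ) / (n - 1)` is what makes the measure-and-prepare channel unital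
  have hτ := hρ.complement (by simpa using h2)
  have hn : (n : ℂ) - 1 ≠ 0 := by
    rw [sub_ne_zero]; exact_mod_cast (by omega : n ≠ 1)
  refine .inl ⟨le_rfl, 1, measurePrepare a ρ _, by simp,
    isChannel_measurePrepare a hρ hτ, ?_, ?_⟩
  · simp only [measurePrepare, Matrix.one_apply_eq, Matrix.trace_one, Fintype.card_fin,
      one_smul, smul_smul, mul_inv_cancel₀ hn, add_sub_cancel]
  · simp [measurePrepare, (isState_single a).2]

end Majorization

namespace Entropy

variable (E : Entropy) {n n' : ℕ}

lemma H_conj_isometry {V : Matrix (Fin n') (Fin n) ℂ} (hV : Vᴴ * V = 1)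
    {ρ : Matrix (Fin n) (Fin n) ℂ} (hρ : IsState ρ) : E.H n' (V * ρ * Vᴴ) = E.H n ρ :=
  le_antisymm (E.mono _ _ _ _ (hρ.conj_isometry hV) hρ (conj_isometry_maj hV ρ))
    (E.mono _ _ _ _ hρ (hρ.conj_isometry hV) (maj_conj_isometry hV ρ))

lemma H_unif_one : E.H 1 (unif 1) = 0 := by
  have h := E.additive 1 1 (unif 1) (unif 1) (isState_unif one_ne_zero)
    (isState_unif one_ne_zero)
  rw [mreindex_unif_kronecker_unif] at h
  linarith

lemma H_unif_two_pow (k : ℕ) : E.H (2 ^ k) (unif (2 ^ k)) = k * E.H 2 (unif 2) := by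
  induction k with
  | zero => simpa using E.H_unif_one
  | succ k ih =>
    have h := E.additive (2 ^ k) 2 (unif (2 ^ k)) (unif 2)
      (isState_unif (pow_ne_zero k two_ne_zero)) (isState_unif two_ne_zero)
    rw [mreindex_unif_kronecker_unif, ← pow_succ, ih] at h
    rw [h]
    push_cast
    ring

lemma H_single (a : Fin n) : E.H n (Matrix.single a a 1) = 0 := by
  let V := (1 : Matrix (Fin n) (Fin n) ℂ).submatrix id fun _ : Fin 1 => a
  have hV : Vᴴ * V = 1 := conjTranspose_mul_submatrix_one fun _ _ _ => Subsingleton.elim _ _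
  have hVV : V * unif 1 * Vᴴ = Matrix.single a a 1 := by
    ext i j
    by_cases hi : a = i <;>
      simp [V, unif, Matrix.mul_apply, Matrix.one_apply, Matrix.single_apply, eq_comm, hi]
  rw [← hVV, E.H_conj_isometry hV (isState_unif one_ne_zero), H_unif_one]

lemma H_nonneg {ρ : Matrix (Fin n) (Fin n) ℂ} (hρ : IsState ρ) : 0 ≤ E.H n ρ := by
  have hn : n ≠ 0 := hρ.dim_ne_zero
  obtain rfl | h2 : n = 1 ∨ 2 ≤ n := by omega
  · rw [hρ.eq_single, H_single]
  · rw [← E.H_single (⟨0, by omega⟩ : Fin n)]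
    exact E.mono _ _ _ _ (isState_single _) hρ (single_maj h2 _ hρ)

lemma H_le_H_unif {ρ : Matrix (Fin n) (Fin n) ℂ} (hρ : IsState ρ) :
    E.H n ρ ≤ E.H n (unif n) :=
  E.mono _ _ _ _ hρ (isState_unif hρ.dim_ne_zero) (maj_unif hρ)

lemma H_unif_mono (hn : n ≠ 0) (h : n ≤ n') : E.H n (unif n) ≤ E.H n' (unif n') := by
  let V := (1 : Matrix (Fin n') (Fin n') ℂ).submatrix id (Fin.castLE h)
  have hV : Vᴴ * V = 1 := conjTranspose_mul_submatrix_one (Fin.castLE_injective h)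
  rw [← E.H_conj_isometry hV (isState_unif hn)]
  exact E.H_le_H_unif ((isState_unif hn).conj_isometry hV)

end Entropy

/-- Every entropy is strictly positive on the uniform state of dimension two. -/
theorem entropy_unif_two_pos (E : Entropy) :
    0 < E.H 2 (unif 2) := by
  obtain ⟨n, ρ, hρ, hne⟩ := E.nontrivial
  have hn : n ≠ 0 := hρ.dim_ne_zero
  have hpos : 0 < E.H n ρ := (E.H_nonneg hρ).lt_of_ne' hne
  have hle : E.H n ρ ≤ n * E.H 2 (unif 2) :=
    calc E.H n ρ ≤ E.H n (unif n) := E.H_le_H_unif hρ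
      _ ≤ E.H (2 ^ n) (unif (2 ^ n)) := E.H_unif_mono hn Nat.lt_two_pow_self.le
      _ = n * E.H 2 (unif 2) := E.H_unif_two_pow n
  exact pos_of_mul_pos_right (hpos.trans_le hle) n.cast_nonneg
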